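/- arXiv:2312.10653 — 5 statements merged into one kernel-verified Lean document; each statement's English description precedes it below -/
import Mathlib

section
/- Let 0 < β₁ ≤ β₂ ≤ β₃ < β₄ with β₁, β₂, β₃ ≤ 1, β₄ − β₃ < 1, |β₁ + β₃ − β₄| ≤ 1 and |β₂ + β₃ − β₄| ≤ 1. Let a, b, c ≤ 0 and d < 0 be real numbers and define Q(s) = s^{β₄} − a s^{β₃} − b s^{β₂} − c s^{β₁} − d (principal powers). Then Q has no zero s with Re(s) ≥ 0. -/
/-! Multiply `Q(s)` by the unit `exp (-i β₃ arg s)` and take real parts. The term `s ^ γ` becomes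
`‖s‖ ^ γ * cos ((γ - β₃) arg s)`, and since `Re s ≥ 0` gives `|arg s| ≤ π / 2`, this is nonnegative
as soon as `|γ - β₃| ≤ 1`, and positive if `|γ - β₃| < 1`. The first bound applies to `γ = β₁, β₂, β₃`
and to `γ = 0` (the constant term), the second to `γ = β₄`; so with `a, b, c ≤ 0`, `d < 0` the real part is positive. -/

open Complex

namespace Complex

theorem re_cpow_mul_exp_neg_arg {s : ℂ} (hs : s ≠ 0) (γ δ : ℝ) :
    (s ^ (γ : ℂ) * exp (-(δ * arg s) * I)).re = ‖s‖ ^ γ * Real.cos ((γ - δ) * arg s) := by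
  rw [cpow_def_of_ne_zero hs, ← exp_add, exp_re]
  have hre : (log s * γ + -(δ * arg s) * I).re = Real.log ‖s‖ * γ := by
    simp [log_re]
  have him : (log s * γ + -(δ * arg s) * I).im = (γ - δ) * arg s := by
    simp [log_im]
    ring
  rw [hre, him, Real.exp_mul, Real.exp_log (norm_pos_iff.mpr hs)]

theorem abs_mul_arg_le_pi_div_two {s : ℂ} (hre : 0 ≤ s.re) {u : ℝ} (hu : |u| ≤ 1) :
    |u * arg s| ≤ Real.pi / 2 := by
  rw [abs_mul]
  calc |u| * |arg s| ≤ 1 * (Real.pi / 2) :=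
        mul_le_mul hu (abs_arg_le_pi_div_two_iff.mpr hre) (abs_nonneg _) zero_le_one
    _ = Real.pi / 2 := one_mul _

theorem abs_mul_arg_lt_pi_div_two {s : ℂ} (hre : 0 ≤ s.re) {u : ℝ} (hu : |u| < 1) :
    |u * arg s| < Real.pi / 2 := by
  rw [abs_mul]
  calc |u| * |arg s| ≤ |u| * (Real.pi / 2) :=
        mul_le_mul_of_nonneg_left (abs_arg_le_pi_div_two_iff.mpr hre) (abs_nonneg _)
    _ < 1 * (Real.pi / 2) := mul_lt_mul_of_pos_right hu (by positivity)
    _ = Real.pi / 2 := one_mul _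

theorem re_cpow_mul_exp_neg_arg_nonneg {s : ℂ} (hs : s ≠ 0) (hre : 0 ≤ s.re) {γ δ : ℝ}
    (hγδ : |γ - δ| ≤ 1) : 0 ≤ (s ^ (γ : ℂ) * exp (-(δ * arg s) * I)).re := by
  rw [re_cpow_mul_exp_neg_arg hs]
  exact mul_nonneg (Real.rpow_nonneg (norm_nonneg s) γ)
    (Real.cos_nonneg_of_mem_Icc (abs_le.mp (abs_mul_arg_le_pi_div_two hre hγδ)))

theorem re_cpow_mul_exp_neg_arg_pos {s : ℂ} (hs : s ≠ 0) (hre : 0 ≤ s.re) {γ δ : ℝ}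
    (hγδ : |γ - δ| < 1) : 0 < (s ^ (γ : ℂ) * exp (-(δ * arg s) * I)).re := by
  rw [re_cpow_mul_exp_neg_arg hs]
  exact mul_pos (Real.rpow_pos_of_pos (norm_pos_iff.mpr hs) γ)
    (Real.cos_pos_of_mem_Ioo (abs_lt.mp (abs_mul_arg_lt_pi_div_two hre hγδ)))

end Complex

theorem stmt_6_general (β₁ β₂ β₃ β₄ : ℝ)
    (h1 : 0 < β₁) (h12 : β₁ ≤ β₂) (h23 : β₂ ≤ β₃) (h34 : β₃ < β₄)
    (hb3 : β₃ ≤ 1)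
    (h43 : β₄ - β₃ < 1)
    (a b c d : ℝ) (ha : a ≤ 0) (hb : b ≤ 0) (hc : c ≤ 0) (hd : d < 0)
    (s : ℂ) (hs : s ≠ 0) (hre : 0 ≤ s.re) :
    s ^ (β₄ : ℂ) - a * s ^ (β₃ : ℂ) - b * s ^ (β₂ : ℂ)
      - c * s ^ (β₁ : ℂ) - d ≠ 0 := by
  intro hQ
  set w := exp (-(β₃ * arg s) * I)
  have hnonneg (γ : ℝ) (hγ : |γ - β₃| ≤ 1) : 0 ≤ (s ^ (γ : ℂ) * w).re :=
    re_cpow_mul_exp_neg_arg_nonneg hs hre hγ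
  have h₄ : 0 < (s ^ (β₄ : ℂ) * w).re :=
    re_cpow_mul_exp_neg_arg_pos hs hre (abs_lt.mpr ⟨by linarith, h43⟩)
  have h₃ := hnonneg β₃ (by simp)
  have h₂ := hnonneg β₂ (abs_le.mpr ⟨by linarith, by linarith⟩)
  have h₁ := hnonneg β₁ (abs_le.mpr ⟨by linarith, by linarith⟩)
  have h₀ : 0 ≤ w.re := by
    simpa using hnonneg 0 (abs_le.mpr ⟨by linarith, by linarith⟩)
  have hsplit : ((s ^ (β₄ : ℂ) - a * s ^ (β₃ : ℂ) - b * s ^ (β₂ : ℂ) - c * s ^ (β₁ : ℂ) - d) * w).re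
      = (s ^ (β₄ : ℂ) * w).re - a * (s ^ (β₃ : ℂ) * w).re - b * (s ^ (β₂ : ℂ) * w).re
        - c * (s ^ (β₁ : ℂ) * w).re - d * w.re := by
    simp only [sub_mul, mul_assoc, sub_re, re_ofReal_mul]
  rw [hQ, zero_mul, zero_re] at hsplit
  linarith [mul_nonneg (neg_nonneg.mpr ha) h₃, mul_nonneg (neg_nonneg.mpr hb) h₂,
    mul_nonneg (neg_nonneg.mpr hc) h₁, mul_nonneg (neg_nonneg.mpr hd.le) h₀]

theorem stmt_6 (β₁ β₂ β₃ β₄ : ℝ)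
    (h1 : 0 < β₁) (h12 : β₁ ≤ β₂) (h23 : β₂ ≤ β₃) (h34 : β₃ < β₄)
    (hb1 : β₁ ≤ 1) (hb2 : β₂ ≤ 1) (hb3 : β₃ ≤ 1)
    (h43 : β₄ - β₃ < 1)
    (h134 : |β₁ + β₃ - β₄| ≤ 1) (h234 : |β₂ + β₃ - β₄| ≤ 1)
    (a b c d : ℝ) (ha : a ≤ 0) (hb : b ≤ 0) (hc : c ≤ 0) (hd : d < 0)
    (s : ℂ) (hs : s ≠ 0) (hre : 0 ≤ s.re) :
    s ^ (β₄ : ℂ) - a * s ^ (β₃ : ℂ) - b * s ^ (β₂ : ℂ)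
      - c * s ^ (β₁ : ℂ) - d ≠ 0 :=
  stmt_6_general β₁ β₂ β₃ β₄ h1 h12 h23 h34 hb3 h43 a b c d ha hb hc hd s hs hre
end

section
/- Let 0 < β₁ < β₂ < β₃ < β₄ < 2 and let a, b, c ≤ 0, d < 0 be real numbers. Define h₁(ω) = ω^{β₄} cos(β₄π/2) − a ω^{β₃} cos(β₃π/2) − b ω^{β₂} cos(β₂π/2) − c ω^{β₁} cos(β₁π/2) − d and h₂(ω) = ω^{β₄} sin(β₄π/2) − a ω^{β₃} sin(β₃π/2) − b ω^{β₂} sin(β₂π/2) − c ω^{β₁} sin(β₁π/2). Then for every ω > 0 with h₂(ω) = 0, we have h₁(ω) > 0. -/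
/-! Multiplying by `sin (β₄π/2)` and subtracting `cos (β₄π/2) · h₂` (i.e. rotating `h₁ + i h₂`
by `-β₄π/2`) cancels the leading term: on `{h₂ = 0}`, `sin (β₄π/2) · h₁` equals
`-a ω^β₃ sin ((β₄-β₃)π/2) - … - d sin (β₄π/2)`, a sum of nonnegative terms and a positive one. -/

open Real Finset

theorem sub_sum_cos_sub_pos_of_sub_sum_sin_eq_zero {ι : Type*} (s : Finset ι) (r θ : ι → ℝ)
    {r₀ θ₀ d : ℝ} (hθ₀ : 0 < θ₀) (hθ₀π : θ₀ < π) (hd : d < 0)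
    (hr : ∀ i ∈ s, r i ≤ 0) (hθ : ∀ i ∈ s, θ₀ - π ≤ θ i ∧ θ i ≤ θ₀)
    (h : r₀ * sin θ₀ - ∑ i ∈ s, r i * sin (θ i) = 0) :
    0 < r₀ * cos θ₀ - ∑ i ∈ s, r i * cos (θ i) - d := by
  have hsin : 0 < sin θ₀ := sin_pos_of_pos_of_lt_pi hθ₀ hθ₀π
  have rotate : sin θ₀ * (r₀ * cos θ₀ - ∑ i ∈ s, r i * cos (θ i) - d) =
      -∑ i ∈ s, r i * sin (θ₀ - θ i) - d * sin θ₀ := by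
    have expand : ∑ i ∈ s, r i * sin (θ₀ - θ i) =
        sin θ₀ * ∑ i ∈ s, r i * cos (θ i) - cos θ₀ * ∑ i ∈ s, r i * sin (θ i) := by
      simp only [sin_sub, mul_sum, ← sum_sub_distrib]
      exact sum_congr rfl fun i _ => by ring
    linear_combination cos θ₀ * h + expand
  have hsum : ∑ i ∈ s, r i * sin (θ₀ - θ i) ≤ 0 := sum_nonpos fun i hi =>
    mul_nonpos_of_nonpos_of_nonneg (hr i hi)
      (sin_nonneg_of_nonneg_of_le_pi (by linarith [(hθ i hi).2]) (by linarith [(hθ i hi).1]))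
  refine pos_of_mul_pos_right (a := sin θ₀) ?_ hsin.le
  rw [rotate]
  nlinarith

theorem stmt_10 (β₁ β₂ β₃ β₄ : ℝ)
    (h1 : 0 < β₁) (h12 : β₁ < β₂) (h23 : β₂ < β₃) (h34 : β₃ < β₄) (h4 : β₄ < 2)
    (a b c d : ℝ) (ha : a ≤ 0) (hb : b ≤ 0) (hc : c ≤ 0) (hd : d < 0)
    (h₁ h₂ : ℝ → ℝ)
    (hh₁ : ∀ ω : ℝ, h₁ ω =
        ω ^ β₄ * Real.cos (β₄ * π / 2) - a * ω ^ β₃ * Real.cos (β₃ * π / 2)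
          - b * ω ^ β₂ * Real.cos (β₂ * π / 2)
          - c * ω ^ β₁ * Real.cos (β₁ * π / 2) - d)
    (hh₂ : ∀ ω : ℝ, h₂ ω =
        ω ^ β₄ * Real.sin (β₄ * π / 2) - a * ω ^ β₃ * Real.sin (β₃ * π / 2)
          - b * ω ^ β₂ * Real.sin (β₂ * π / 2)
          - c * ω ^ β₁ * Real.sin (β₁ * π / 2)) :
    ∀ ω : ℝ, 0 < ω → h₂ ω = 0 → 0 < h₁ ω := by
  intro ω hω hzero
  have hπ := pi_pos
  have hr : ∀ {k : ℝ} (β : ℝ), k ≤ 0 → k * ω ^ β ≤ 0 := fun β hk =>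
    mul_nonpos_of_nonpos_of_nonneg hk (rpow_pos_of_pos hω β).le
  have hθ : ∀ β, β₄ - 2 ≤ β → β ≤ β₄ → β₄ * π / 2 ≤ β * π / 2 + π ∧ β * π / 2 ≤ β₄ * π / 2 :=
    fun β hlo hhi => ⟨by nlinarith, by nlinarith⟩
  have key := sub_sum_cos_sub_pos_of_sub_sum_sin_eq_zero univ
    ![a * ω ^ β₃, b * ω ^ β₂, c * ω ^ β₁] ![β₃ * π / 2, β₂ * π / 2, β₁ * π / 2]
    (r₀ := ω ^ β₄) (θ₀ := β₄ * π / 2) (by nlinarith) (by nlinarith) hd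
    (by simpa [Fin.forall_fin_succ] using ⟨hr β₃ ha, hr β₂ hb, hr β₁ hc⟩)
    (by simpa [Fin.forall_fin_succ] using
      ⟨hθ β₃ (by linarith) h34.le, hθ β₂ (by linarith) (by linarith),
        hθ β₁ (by linarith) (by linarith)⟩)
    (by simpa [Fin.sum_univ_three, sub_sub, mul_assoc] using (hh₂ ω).symm.trans hzero)
  simpa [hh₁ ω, Fin.sum_univ_three, sub_sub, mul_assoc] using key
end

section
/- Let 0 < β₁ < β₄ < 2, c > 0, and d < −c ρ₁ (c ρ̃₁)^{β₁/(β₄−β₁)}, where ρ₁ = sin((β₄−β₁)π/2)/sin(β₄π/2) and ρ̃₁ = sin(β₁π/2)/sin(β₄π/2). Define h₁(ω) = ω^{β₄} cos(β₄π/2) − c ω^{β₁} cos(β₁π/2) − d and h₂(ω) = ω^{β₄} sin(β₄π/2) − c ω^{β₁} sin(β₁π/2). Then for every ω > 0 with h₂(ω) = 0, we have h₁(ω) > 0. -/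
/-!
At a positive zero `ω` of `h₂` we have `ω ^ β₄ = c ρ̃₁ ω ^ β₁`, hence `ω ^ (β₄ - β₁) = c ρ̃₁` and
`ω ^ β₁ = (c ρ̃₁) ^ (β₁ / (β₄ - β₁))`. Substituting into `h₁` and using
`ρ̃₁ cos (β₄π/2) - cos (β₁π/2) = -ρ₁` (the subtraction formula for `sin ((β₄ - β₁)π/2)`) gives
`h₁ ω = -c ρ₁ (c ρ̃₁) ^ (β₁ / (β₄ - β₁)) - d`, which is positive by the assumption on `d`.
-/

open Real

lemma sin_mul_pi_div_two_pos {β : ℝ} (h0 : 0 < β) (h2 : β < 2) : 0 < sin (β * π / 2) :=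
  sin_pos_of_pos_of_lt_pi (by positivity) (by nlinarith [pi_pos])

lemma sin_div_sin_mul_cos_sub_cos {a b : ℝ} (hb : sin b ≠ 0) :
    sin a / sin b * cos b - cos a = -(sin (b - a) / sin b) := by
  rw [sin_sub]
  field_simp
  ring

lemma rpow_eq_rpow_div_sub_of_rpow_eq_mul {ω p q a : ℝ} (hω : 0 < ω) (hpq : p ≠ q)
    (h : ω ^ q = a * ω ^ p) : ω ^ p = a ^ (p / (q - p)) := by
  have hsub : ω ^ (q - p) = a := by
    rw [rpow_sub hω, h, mul_div_cancel_right₀ _ (rpow_pos_of_pos hω p).ne']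
  rw [← hsub, ← rpow_mul hω.le, mul_div_cancel₀ _ (sub_ne_zero.2 hpq.symm)]

theorem stmt_12_general (β₁ β₄ : ℝ) (h1 : 0 < β₁) (h14 : β₁ < β₄) (h4 : β₄ < 2)
    (c d : ℝ)
    (ρ₁ ρt₁ : ℝ)
    (hρ₁ : ρ₁ = Real.sin ((β₄ - β₁) * π / 2) / Real.sin (β₄ * π / 2))
    (hρt₁ : ρt₁ = Real.sin (β₁ * π / 2) / Real.sin (β₄ * π / 2))
    (hd : d < - c * ρ₁ * (c * ρt₁) ^ (β₁ / (β₄ - β₁)))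
    (h₁ h₂ : ℝ → ℝ)
    (hh₁ : ∀ ω : ℝ, h₁ ω =
        ω ^ β₄ * Real.cos (β₄ * π / 2) - c * ω ^ β₁ * Real.cos (β₁ * π / 2) - d)
    (hh₂ : ∀ ω : ℝ, h₂ ω =
        ω ^ β₄ * Real.sin (β₄ * π / 2) - c * ω ^ β₁ * Real.sin (β₁ * π / 2)) :
    ∀ ω : ℝ, 0 < ω → h₂ ω = 0 → 0 < h₁ ω := by
  intro ω hω hzero
  rw [hh₂] at hzero
  have hs₄ : sin (β₄ * π / 2) ≠ 0 := (sin_mul_pi_div_two_pos (h1.trans h14) h4).ne'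
  have hpow₄ : ω ^ β₄ = c * ρt₁ * ω ^ β₁ := by
    rw [hρt₁, mul_div_assoc', div_mul_eq_mul_div, eq_div_iff hs₄]
    linear_combination hzero
  have hpow₁ := rpow_eq_rpow_div_sub_of_rpow_eq_mul hω h14.ne hpow₄
  have hcoef : ρt₁ * cos (β₄ * π / 2) - cos (β₁ * π / 2) = -ρ₁ := by
    rw [hρt₁, hρ₁, sin_div_sin_mul_cos_sub_cos hs₄, sub_mul, sub_div]
  rw [hh₁, hpow₄, hpow₁]
  linear_combination hd - c * (c * ρt₁) ^ (β₁ / (β₄ - β₁)) * hcoef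

theorem stmt_12 (β₁ β₄ : ℝ) (h1 : 0 < β₁) (h14 : β₁ < β₄) (h4 : β₄ < 2)
    (c d : ℝ) (hc : 0 < c)
    (ρ₁ ρt₁ : ℝ)
    (hρ₁ : ρ₁ = Real.sin ((β₄ - β₁) * π / 2) / Real.sin (β₄ * π / 2))
    (hρt₁ : ρt₁ = Real.sin (β₁ * π / 2) / Real.sin (β₄ * π / 2))
    (hd : d < - c * ρ₁ * (c * ρt₁) ^ (β₁ / (β₄ - β₁)))
    (h₁ h₂ : ℝ → ℝ)
    (hh₁ : ∀ ω : ℝ, h₁ ω =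
        ω ^ β₄ * Real.cos (β₄ * π / 2) - c * ω ^ β₁ * Real.cos (β₁ * π / 2) - d)
    (hh₂ : ∀ ω : ℝ, h₂ ω =
        ω ^ β₄ * Real.sin (β₄ * π / 2) - c * ω ^ β₁ * Real.sin (β₁ * π / 2)) :
    ∀ ω : ℝ, 0 < ω → h₂ ω = 0 → 0 < h₁ ω :=
  stmt_12_general β₁ β₄ h1 h14 h4 c d ρ₁ ρt₁ hρ₁ hρt₁ hd h₁ h₂ hh₁ hh₂
end

section
/- Let n ∈ ℕ, let c₁, …, c_n ≥ 0 with not all c_k equal (in particular max c_k > 0), let ψ₁, …, ψ_n ∈ (0, 2), let β₄ ∈ [2, 3] and d < 0. Define Q(s) = s^{β₄} − Σ_{k=1}^n c_k s^{ψ_k} − d. Then for every ω > 0, Im Q(ωi) < 0. -/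
open Complex Real Finset

lemma Complex.im_ofReal_mul_I_cpow_ofReal {ω : ℝ} (hω : 0 < ω) (γ : ℝ) :
    (((ω : ℂ) * I) ^ (γ : ℂ)).im = ω ^ γ * Real.sin (γ * π / 2) := by
  have harg : arg ((ω : ℂ) * I) = π / 2 := by
    rw [← arg_I, arg_real_mul I hω]
  rw [cpow_ofReal_im, harg, norm_mul, norm_real, norm_I, mul_one, Real.norm_of_nonneg hω.le]
  ring_nf

lemma Real.sin_mul_pi_div_two_pos {γ : ℝ} (h₀ : 0 < γ) (h₂ : γ < 2) :
    0 < Real.sin (γ * π / 2) :=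
  Real.sin_pos_of_pos_of_lt_pi (by positivity) (by nlinarith [Real.pi_pos])

lemma Real.sin_mul_pi_div_two_nonpos {γ : ℝ} (h₂ : 2 ≤ γ) (h₄ : γ ≤ 4) :
    Real.sin (γ * π / 2) ≤ 0 := by
  rw [← Real.sin_sub_two_pi]
  exact Real.sin_nonpos_of_nonpos_of_neg_pi_le (by nlinarith [Real.pi_pos])
    (by nlinarith [Real.pi_pos])

lemma exists_pos_of_nonneg_of_ne {ι : Type*} {c : ι → ℝ} (hc : ∀ k, 0 ≤ c k)
    (hne : ∃ j k, c j ≠ c k) : ∃ k, 0 < c k := by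
  by_contra! hall
  obtain ⟨j, k, hjk⟩ := hne
  exact hjk ((le_antisymm (hall j) (hc j)).trans (le_antisymm (hall k) (hc k)).symm)

theorem stmt_16_general (n : ℕ) (c ψ : Fin n → ℝ)
    (hc : ∀ k, 0 ≤ c k) (hne : ∃ j k, c j ≠ c k)
    (hψ : ∀ k, ψ k ∈ Set.Ioo (0:ℝ) 2)
    (β₄ : ℝ) (hβ₄ : β₄ ∈ Set.Icc (2:ℝ) 3) (d : ℝ)
    (Q : ℂ → ℂ)
    (hQ : ∀ s : ℂ, Q s = s ^ (β₄ : ℂ)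
        - ∑ k : Fin n, (c k : ℂ) * s ^ ((ψ k : ℝ) : ℂ) - (d : ℂ)) :
    ∀ ω : ℝ, 0 < ω → (Q (ω * Complex.I)).im < 0 := by
  intro ω hω
  have hlead : ω ^ β₄ * Real.sin (β₄ * π / 2) ≤ 0 :=
    mul_nonpos_of_nonneg_of_nonpos (by positivity)
      (Real.sin_mul_pi_div_two_nonpos hβ₄.1 (by linarith [hβ₄.2]))
  have hterm (k : Fin n) : 0 ≤ c k * (ω ^ ψ k * Real.sin (ψ k * π / 2)) :=
    mul_nonneg (hc k) (mul_nonneg (by positivity)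
      (Real.sin_mul_pi_div_two_pos (hψ k).1 (hψ k).2).le)
  obtain ⟨m, hm⟩ := exists_pos_of_nonneg_of_ne hc hne
  have hsum : 0 < ∑ k, c k * (ω ^ ψ k * Real.sin (ψ k * π / 2)) :=
    Finset.sum_pos' (fun k _ => hterm k) ⟨m, mem_univ m,
      mul_pos hm (mul_pos (by positivity) (Real.sin_mul_pi_div_two_pos (hψ m).1 (hψ m).2))⟩
  simp only [hQ, sub_im, ofReal_im, sub_zero, im_sum, im_ofReal_mul,
    im_ofReal_mul_I_cpow_ofReal hω]
  linarith

theorem stmt_16 (n : ℕ) (c ψ : Fin n → ℝ)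
    (hc : ∀ k, 0 ≤ c k) (hne : ∃ j k, c j ≠ c k)
    (hψ : ∀ k, ψ k ∈ Set.Ioo (0:ℝ) 2)
    (β₄ : ℝ) (hβ₄ : β₄ ∈ Set.Icc (2:ℝ) 3) (d : ℝ) (hd : d < 0)
    (Q : ℂ → ℂ)
    (hQ : ∀ s : ℂ, Q s = s ^ (β₄ : ℂ)
        - ∑ k : Fin n, (c k : ℂ) * s ^ ((ψ k : ℝ) : ℂ) - (d : ℂ)) :
    ∀ ω : ℝ, 0 < ω → (Q (ω * Complex.I)).im < 0 :=
  stmt_16_general n c ψ hc hne hψ β₄ hβ₄ d Q hQ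
end

section
/- Let α₁, α₂, α₃ ∈ (0, 1] and let A be a real 3×3 matrix with det A > 0. Define Q : (0, ∞) → ℝ by Q(s) = det(diag(s^{α₁}, s^{α₂}, s^{α₃}) − A). Then Q has a zero in (0, ∞); i.e., the characteristic function of the fractional system has a positive real root. -/
/-!
Write `Q s = det (D_s - A)` with `D_s = diag (s ^ αᵢ)`. The map `s ↦ Q s` is continuous on
`[0, ∞)`, and `Q 0 = det (-A) = -det A < 0` because the dimension is odd. For large `s`,
`D_s - A = D_s (1 - D_s⁻¹ A)` with `det D_s = s ^ (∑ αᵢ) → ∞` and `D_s⁻¹ → 0`, so `Q s → ∞`.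
The intermediate value theorem then gives a positive root.
-/

open Matrix Filter Topology

variable {n : Type*} [Fintype n] [DecidableEq n]

theorem Matrix.diagonal_sub_eq_diagonal_mul {d : n → ℝ} (hd : ∀ i, d i ≠ 0)
    (A : Matrix n n ℝ) : diagonal d - A = diagonal d * (1 - diagonal d⁻¹ * A) := by
  have hinv : diagonal d * diagonal d⁻¹ = 1 := by
    rw [diagonal_mul_diagonal, ← diagonal_one]
    exact congrArg diagonal (funext fun i => mul_inv_cancel₀ (hd i))
  rw [mul_sub, mul_one, ← Matrix.mul_assoc, hinv, Matrix.one_mul]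

theorem continuous_det_diagonal_rpow_sub {α : n → ℝ} (hα : ∀ i, 0 ≤ α i)
    (A : Matrix n n ℝ) :
    Continuous fun s : ℝ => (diagonal (fun i => s ^ α i) - A).det :=
  ((continuous_pi fun i => Real.continuous_rpow_const (hα i)).matrix_diagonal.sub
    continuous_const).matrix_det

theorem det_diagonal_zero_rpow_sub {α : n → ℝ} (hα : ∀ i, α i ≠ 0) (A : Matrix n n ℝ) :
    (diagonal (fun i => (0 : ℝ) ^ α i) - A).det = (-1) ^ Fintype.card n * A.det := by
  simp only [Real.zero_rpow (hα _), diagonal_zero, zero_sub, det_neg]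

theorem tendsto_det_diagonal_rpow_sub_atTop [Nonempty n] {α : n → ℝ} (hα : ∀ i, 0 < α i)
    (A : Matrix n n ℝ) :
    Tendsto (fun s : ℝ => (diagonal (fun i => s ^ α i) - A).det) atTop atTop := by
  have hdet : Tendsto (fun s : ℝ => s ^ ∑ i, α i) atTop atTop :=
    tendsto_rpow_atTop (Finset.sum_pos (fun i _ => hα i) Finset.univ_nonempty)
  have hinv : Tendsto (fun s : ℝ => fun i => (s ^ α i)⁻¹) atTop (𝓝 0) :=
    tendsto_pi_nhds.2 fun i => (tendsto_rpow_atTop (hα i)).inv_tendsto_atTop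
  have hcont : Continuous fun v : n → ℝ => (1 - diagonal v * A).det :=
    (continuous_const.sub (continuous_id.matrix_diagonal.matrix_mul continuous_const)).matrix_det
  have hunit : Tendsto (fun s : ℝ => (1 - diagonal (fun i => (s ^ α i)⁻¹) * A).det)
      atTop (𝓝 1) := by
    have h1 : (1 - diagonal (0 : n → ℝ) * A).det = 1 := by simp
    rw [← h1]
    exact (hcont.tendsto 0).comp hinv
  refine (hdet.atTop_mul_pos one_pos hunit).congr' ?_
  filter_upwards [eventually_gt_atTop 0] with s hs
  rw [diagonal_sub_eq_diagonal_mul (fun i => (Real.rpow_pos_of_pos hs (α i)).ne'), det_mul,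
    det_diagonal, Real.rpow_sum_of_pos hs]
  rfl

theorem exists_pos_eq_zero_of_tendsto_atTop {f : ℝ → ℝ} (hf : Continuous f) (h0 : f 0 < 0)
    (htop : Tendsto f atTop atTop) : ∃ s, 0 < s ∧ f s = 0 := by
  obtain ⟨b, hb, hb0⟩ := ((htop.eventually_gt_atTop 0).and (eventually_gt_atTop 0)).exists
  obtain ⟨s, ⟨hs, -⟩, hfs⟩ := intermediate_value_Ioo hb0.le hf.continuousOn ⟨h0, hb⟩
  exact ⟨s, hs, hfs⟩

theorem exists_pos_det_diagonal_rpow_sub_eq_zero (hn : Odd (Fintype.card n)) {α : n → ℝ}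
    (hα : ∀ i, 0 < α i) {A : Matrix n n ℝ} (hA : 0 < A.det) :
    ∃ s, 0 < s ∧ (diagonal (fun i => s ^ α i) - A).det = 0 := by
  have : Nonempty n := Fintype.card_pos_iff.1 hn.pos
  refine exists_pos_eq_zero_of_tendsto_atTop
    (continuous_det_diagonal_rpow_sub (fun i => (hα i).le) A) ?_
    (tendsto_det_diagonal_rpow_sub_atTop hα A)
  rw [det_diagonal_zero_rpow_sub (fun i => (hα i).ne'), hn.neg_one_pow]
  linarith

theorem stmt_17 (α₁ α₂ α₃ : ℝ) (hα₁ : α₁ ∈ Set.Ioc (0:ℝ) 1)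
    (hα₂ : α₂ ∈ Set.Ioc (0:ℝ) 1) (hα₃ : α₃ ∈ Set.Ioc (0:ℝ) 1)
    (A : Matrix (Fin 3) (Fin 3) ℝ) (hdet : 0 < A.det)
    (Q : ℝ → ℝ)
    (hQ : ∀ s : ℝ, 0 < s → Q s =
        (Matrix.diagonal ![s ^ α₁, s ^ α₂, s ^ α₃] - A).det) :
    ∃ s : ℝ, 0 < s ∧ Q s = 0 := by
  have hα : ∀ i, 0 < ![α₁, α₂, α₃] i := by
    intro i
    fin_cases i
    exacts [hα₁.1, hα₂.1, hα₃.1]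
  obtain ⟨s, hs, hroot⟩ :=
    exists_pos_det_diagonal_rpow_sub_eq_zero (by decide) hα hdet
  refine ⟨s, hs, ?_⟩
  rw [hQ s hs, ← hroot]
  congr 3
  ext i
  fin_cases i <;> rfl
end
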